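/- In the fused permutations algebra H_{k,n} (n ≥ 1), realized as P_k C[S_{k+n}] P_k with P_k the symmetrizer on the first k letters, the element σ_0 = P_k δ_k P_k satisfies σ_0^2 = (1/k) P_k + ((k-1)/k) σ_0; equivalently, (σ_0 - P_k)(σ_0 + (1/k) P_k) = 0, where P_k is the unit of the algebra. -/

import Mathlib

/-!
Write `δ = (x b)` with `x` among the first `k` letters and `b` outside them. Because `P` absorbs
the image of `S_k` on either side and is idempotent, `σ₀² = P δ P δ P` is the average over
`w ∈ S_k` of `P (δ w δ) P`. If `w` fixes `x` then `δ` commutes with `w` and the term is `P`;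
otherwise `δ w δ = (w x, x) δ w` with `(w x, x) ∈ S_k`, so the term is `σ₀`. A fraction `1/k`
of `S_k` fixes `x`. The factored form follows from the quadratic relation since `P` is a unit
for `σ₀`.
-/

/-- The symmetrizer `P_k = (1/k!) ∑_{w ∈ S_k} w`, viewed inside the complex group algebra
`ℂ[S_{k+n}]` via the standard inclusion `S_k ⊂ S_{k+n}` (acting on the first `k` letters). -/
noncomputable def symmetrizer (k n : ℕ) : MonoidAlgebra ℂ (Equiv.Perm (Fin (k + n))) :=
  ((k.factorial : ℂ))⁻¹ • ∑ w : Equiv.Perm (Fin k),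
    MonoidAlgebra.of ℂ (Equiv.Perm (Fin (k + n)))
      (w.viaEmbedding (Fin.castLEEmb (Nat.le_add_right k n)))

open Equiv Equiv.Perm MonoidAlgebra Finset

section AverageAlong

variable {K G H : Type*} [Semifield K] [Group G] [Group H] [Fintype H]

noncomputable def averageAlong (f : H →* G) : MonoidAlgebra K G :=
  (Fintype.card H : K)⁻¹ • ∑ h, of K G (f h)

variable (f : H →* G)

theorem averageAlong_mul_of (u : H) :
    averageAlong (K := K) f * of K G (f u) = averageAlong f := by
  rw [averageAlong, smul_mul_assoc, sum_mul]
  congr 1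
  exact Fintype.sum_equiv (Equiv.mulRight u) _ _ fun h => by simp [← map_mul]

theorem of_mul_averageAlong (u : H) :
    of K G (f u) * averageAlong (K := K) f = averageAlong f := by
  rw [averageAlong, mul_smul_comm, mul_sum]
  congr 1
  exact Fintype.sum_equiv (Equiv.mulLeft u) _ _ fun h => by simp [← map_mul]

theorem averageAlong_mul_self (hH : (Fintype.card H : K) ≠ 0) :
    averageAlong (K := K) f * averageAlong f = averageAlong f := by
  conv_lhs => enter [2]; rw [averageAlong]
  rw [mul_smul_comm, mul_sum]
  simp only [averageAlong_mul_of, sum_const, card_univ, ← Nat.cast_smul_eq_nsmul K, smul_smul,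
    inv_mul_cancel₀ hH, one_smul]

theorem mul_averageAlong_mul (X Y : MonoidAlgebra K G) :
    X * averageAlong f * Y = (Fintype.card H : K)⁻¹ • ∑ h, X * of K G (f h) * Y := by
  rw [averageAlong, mul_smul_comm, smul_mul_assoc, mul_sum, sum_mul]

end AverageAlong

theorem sub_mul_add_smul_eq_zero {R A : Type*} [CommRing R] [Ring A] [Algebra R A] {P σ : A}
    {c : R} (hP : P * P = P) (hPσ : P * σ = σ) (hσP : σ * P = σ)
    (hσ : σ * σ = c • P + (1 - c) • σ) : (σ - P) * (σ + c • P) = 0 := by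
  rw [sub_mul, mul_add, mul_add, mul_smul_comm, mul_smul_comm, hσ, hσP, hP, hPσ]
  module

section Swap

variable {α : Type*} [DecidableEq α] {a b : α} {g : Perm α}

theorem swap_mul_mul_swap_of_apply_eq (ha : g a = a) (hb : g b = b) :
    swap a b * g * swap a b = g := by
  rw [mul_assoc, mul_swap_eq_swap_mul, ha, hb, swap_mul_self_mul]

theorem swap_mul_mul_swap_of_apply_ne (hab : a ≠ b) (ha : g a ≠ a) (hb : g b = b) :
    swap a b * g * swap a b = swap (g a) a * swap a b * g := by
  have hgab : g a ≠ b := fun h => hab (g.injective (h.trans hb.symm))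
  rw [mul_assoc, mul_swap_eq_swap_mul, hb, ← mul_assoc]
  congr 1
  rw [swap_comm (g a) a, ← swap_mul_swap_mul_swap hgab ha, swap_comm b a,
    mul_assoc _ (swap a b), swap_mul_self, mul_one]

theorem viaEmbedding_swap {β : Type*} [DecidableEq β] (e : α ↪ β) (x y : α) :
    (swap x y).viaEmbedding e = swap (e x) (e y) := by
  ext z
  by_cases hz : z ∈ Set.range e
  · obtain ⟨z, rfl⟩ := hz
    rw [viaEmbedding_apply, e.swap_apply]
  · rw [viaEmbedding_apply_of_notMem _ _ _ hz, swap_apply_of_ne_of_ne] <;>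
      rintro rfl <;> exact hz ⟨_, rfl⟩

theorem card_filter_apply_eq_self_mul_card [Fintype α] (x : α) :
    #{w : Perm α | w x = x} * Fintype.card α = (Fintype.card α).factorial := by
  have := (MulAction.stabilizer (Perm α) x).card_mul_index
  rw [MulAction.index_stabilizer_of_transitive, Nat.card_perm, Nat.card_eq_fintype_card,
    Nat.card_eq_fintype_card, Fintype.card_subtype] at this
  exact this

end Swap

section Symmetrizer

variable {K α β : Type*} [Field K] [CharZero K] [Fintype α] [DecidableEq α] [DecidableEq β]
  (e : α ↪ β) {x : α} {b : β}

local notation "P" => averageAlong (K := K) (viaEmbeddingHom e)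
local notation "δ" => of K (Perm β) (swap (e x) b)

omit [DecidableEq β] in
theorem averageAlong_viaEmbeddingHom_mul_self : P * P = P :=
  averageAlong_mul_self _ (by simp)

theorem averageAlong_mul_swap_mul_of_mul_swap_mul_averageAlong (hb : b ∉ Set.range e)
    (w : Perm α) :
    P * δ * of K (Perm β) (viaEmbeddingHom e w) * (δ * P) = if w x = x then P else P * δ * P := by
  have hwb : viaEmbeddingHom e w b = b := viaEmbedding_apply_of_notMem _ _ _ hb
  have hxb : e x ≠ b := fun h => hb ⟨x, h⟩
  rw [show P * δ * of K (Perm β) (viaEmbeddingHom e w) * (δ * P)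
      = P * of K (Perm β) (swap (e x) b * viaEmbeddingHom e w * swap (e x) b) * P by
    simp only [map_mul, mul_assoc]]
  split_ifs with hwx
  · have : viaEmbeddingHom e w (e x) = e x := by
      rw [viaEmbeddingHom_apply, viaEmbedding_apply, hwx]
    rw [swap_mul_mul_swap_of_apply_eq this hwb, averageAlong_mul_of,
      averageAlong_viaEmbeddingHom_mul_self]
  · have hwex : viaEmbeddingHom e w (e x) = e (w x) := viaEmbedding_apply _ _ _
    rw [swap_mul_mul_swap_of_apply_ne hxb (by rwa [hwex, e.injective.ne_iff]) hwb, hwex,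
      ← viaEmbedding_swap, ← viaEmbeddingHom_apply, map_mul, map_mul, mul_assoc, mul_assoc,
      of_mul_averageAlong, ← mul_assoc, ← mul_assoc, averageAlong_mul_of]

theorem averageAlong_mul_swap_mul_averageAlong_sq (hb : b ∉ Set.range e) :
    (P * δ * P) * (P * δ * P)
      = (Fintype.card α : K)⁻¹ • P
        + (((Fintype.card α : K) - 1) / Fintype.card α) • (P * δ * P) := by
  set N := Fintype.card α
  have hN : (N : K) ≠ 0 := Nat.cast_ne_zero.mpr (Fintype.card_pos_iff.mpr ⟨x⟩).ne'
  have hF : (N.factorial : K) ≠ 0 := Nat.cast_ne_zero.mpr N.factorial_ne_zero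
  have hfix : (#{w : Perm α | w x = x} : K) * N = N.factorial := by
    exact_mod_cast card_filter_apply_eq_self_mul_card x
  have hsplit : (#{w : Perm α | w x = x} : K) + #{w : Perm α | ¬w x = x} = N.factorial := by
    exact_mod_cast (card_filter_add_card_filter_not _).trans (Fintype.card_perm (α := α))
  calc (P * δ * P) * (P * δ * P) = P * δ * (P * P) * (δ * P) := by simp only [mul_assoc]
    _ = (N.factorial : K)⁻¹ • ∑ w : Perm α, if w x = x then P else P * δ * P := by
        rw [averageAlong_viaEmbeddingHom_mul_self, mul_averageAlong_mul, Fintype.card_perm]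
        simp only [averageAlong_mul_swap_mul_of_mul_swap_mul_averageAlong e hb, N]
    _ = (N : K)⁻¹ • P + (((N : K) - 1) / N) • (P * δ * P) := by
        rw [sum_ite, sum_const, sum_const, ← Nat.cast_smul_eq_nsmul K, ← Nat.cast_smul_eq_nsmul K,
          smul_add, smul_smul, smul_smul]
        congr 2
        · field_simp
          linear_combination hfix
        · field_simp
          linear_combination N * hsplit - hfix

end Symmetrizer

theorem symmetrizer_eq_averageAlong (k n : ℕ) :
    symmetrizer k n = averageAlong (viaEmbeddingHom (Fin.castLEEmb (Nat.le_add_right k n))) := by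
  rw [symmetrizer, averageAlong, Fintype.card_perm, Fintype.card_fin]
  rfl

/-- In `H_{k,n} = P_k ℂ[S_{k+n}] P_k`, the element `σ₀ = P_k δ_k P_k` (with `δ_k` the
transposition of the 1-based points `k, k+1`, i.e. the 0-based points `k-1, k`) satisfies
`σ₀² = (1/k) P_k + ((k-1)/k) σ₀`; equivalently `(σ₀ - P_k)(σ₀ + (1/k) P_k) = 0`,
where `P_k` is the unit of the algebra. -/
theorem sigma0_quadratic (k n : ℕ) (hk : 1 ≤ k) (hn : 1 ≤ n) :
    let P := symmetrizer k n
    let σ₀ := P * MonoidAlgebra.of ℂ (Equiv.Perm (Fin (k + n)))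
      (Equiv.swap (⟨k - 1, by omega⟩ : Fin (k + n)) ⟨k, by omega⟩) * P
    σ₀ * σ₀ = (k : ℂ)⁻¹ • P + (((k : ℂ) - 1) / (k : ℂ)) • σ₀ ∧
      (σ₀ - P) * (σ₀ + (k : ℂ)⁻¹ • P) = 0 := by
  intro P σ₀
  set e := Fin.castLEEmb (Nat.le_add_right k n)
  have hP : P = averageAlong (viaEmbeddingHom e) := symmetrizer_eq_averageAlong k n
  have hPP : P * P = P := hP ▸ averageAlong_viaEmbeddingHom_mul_self e
  have hb : (⟨k, by omega⟩ : Fin (k + n)) ∉ Set.range e := by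
    rintro ⟨y, hy⟩
    exact y.isLt.ne (congrArg Fin.val hy)
  have hsq : σ₀ * σ₀ = (k : ℂ)⁻¹ • P + (((k : ℂ) - 1) / k) • σ₀ := by
    have := averageAlong_mul_swap_mul_averageAlong_sq (K := ℂ) e (x := ⟨k - 1, by omega⟩) hb
    rwa [Fintype.card_fin, ← hP] at this
  have hcoef : ((k : ℂ) - 1) / k = 1 - (k : ℂ)⁻¹ := by
    rw [sub_div, div_self (by exact_mod_cast (by omega : k ≠ 0)), one_div]
  refine ⟨hsq, sub_mul_add_smul_eq_zero hPP ?_ ?_ (hcoef ▸ hsq)⟩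
  · simp only [σ₀, ← mul_assoc, hPP]
  · simp only [σ₀, mul_assoc, hPP]
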